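/- If A is an l-regular language over Σ, then its complement A⊥, defined by A⊥(ω) = (A(ω))⊥, is an l-regular language. -/

import Mathlib

/-- A complete orthomodular lattice. -/
class OrthomodularCompleteLattice (α : Type*) extends CompleteLattice α, Compl α where
  inf_compl_self : ∀ a : α, a ⊓ aᶜ = ⊥
  sup_compl_self : ∀ a : α, a ⊔ aᶜ = ⊤
  compl_compl' : ∀ a : α, aᶜᶜ = a
  compl_antitone : ∀ a b : α, a ≤ b → bᶜ ≤ aᶜ
  orthomodular : ∀ a b : α, a ≤ b → b = a ⊔ (aᶜ ⊓ b)

/-- An `l`-valued finite automaton (`l`-VFA). -/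
structure LVFA (Q A l : Type*) where
  δ : Q → A → Q → l
  init : Q → l
  final : Q → l

/-- The `l`-valued language recognized by an `l`-VFA. -/
def lvfaLang {Q A l : Type*} [OrthomodularCompleteLattice l] (M : LVFA Q A l)
    (w : List A) : l :=
  ⨆ path : Fin (w.length + 1) → Q,
    M.init (path 0) ⊓
      (⨅ i : Fin w.length, M.δ (path i.castSucc) (w.get i) (path i.succ)) ⊓
      M.final (path (Fin.last w.length))

/-- An `l`-valued deterministic finite automaton (`l`-VDFA). -/
structure LVDFA (Q A l : Type*) where
  next : Q → A → Q
  start : Q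
  final : Q → l

/-- The `l`-valued language recognized by an `l`-VDFA. -/
def lvdfaLang {Q A l : Type*} (M : LVDFA Q A l) (w : List A) : l :=
  M.final (w.foldl M.next M.start)

/-- An `l`-valued finite automaton with ε-moves (`ε` is encoded as `none`). -/
structure LVFAe (Q A l : Type*) where
  δ : Q → Option A → Q → l
  init : Q → l
  final : Q → l

/-- The `l`-valued language recognized by an `l`-VFA with ε-moves. -/
def lvfaeLang {Q A l : Type*} [OrthomodularCompleteLattice l] (M : LVFAe Q A l)
    (w : List A) : l :=
  ⨆ n : ℕ, ⨆ τ : Fin n → Option A, ⨆ _ : (List.ofFn τ).reduceOption = w,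
    ⨆ path : Fin (n + 1) → Q,
      M.init (path 0) ⊓
        (⨅ i : Fin n, M.δ (path i.castSucc) (τ i) (path i.succ)) ⊓
        M.final (path (Fin.last n))

/-- An `l`-valued language is `l`-regular if it is recognized by some `l`-VFA. -/
def IsLRegular {A l : Type*} [OrthomodularCompleteLattice l] (f : List A → l) : Prop :=
  ∃ (Q : Type) (_ : Fintype Q) (M : LVFA Q A l), ∀ w, lvfaLang M w = f w

/-!
The summand of a path in `lvfaLang M w` depends only on its trace: its first state, the set of
transitions it uses, and its last state. There are finitely many traces, and the set of traces of
the paths reading `w` is computed letter by letter by a deterministic automaton over sets of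
traces. Its state after `w` therefore determines `lvfaLang M w`, so giving a state `T` the
output `g (⨆ t ∈ T, value of t)` yields a finite deterministic recognizer of `g ∘ lvfaLang M`
for any `g`, in particular for the orthocomplement; a deterministic automaton is an `l`-VFA whose
transitions and initial weights are `⊤` or `⊥`. No distributivity is needed: the value is never split
along the word, only recomputed from the whole trace set.
-/

namespace LVDFA

variable {Q A l : Type*}

def IsRun (M : LVDFA Q A l) (s : Q) (w : List A) (p : Fin (w.length + 1) → Q) : Prop :=
  p 0 = s ∧ ∀ i, p i.succ = M.next (p i.castSucc) (w.get i)

theorem IsRun.last_eq_foldl {M : LVDFA Q A l} {s : Q} {w : List A} {p : Fin (w.length + 1) → Q}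
    (hp : M.IsRun s w p) : p (Fin.last w.length) = w.foldl M.next s := by
  induction w generalizing s with
  | nil => exact hp.1
  | cons a w ih =>
    obtain ⟨h0, hstep⟩ := hp
    have htail : M.IsRun (M.next s a) w (Fin.tail p) := by
      refine ⟨h0 ▸ hstep 0, fun i => ?_⟩
      show p i.succ.succ = M.next (p i.castSucc.succ) (w.get i)
      rw [Fin.succ_castSucc]
      exact hstep i.succ
    exact ih htail

theorem exists_isRun (M : LVDFA Q A l) (s : Q) (w : List A) :
    ∃ p : Fin (w.length + 1) → Q, M.IsRun s w p := by
  induction w generalizing s with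
  | nil => exact ⟨fun _ => s, rfl, fun i => i.elim0⟩
  | cons a w ih =>
    obtain ⟨p, h0, hstep⟩ := ih (M.next s a)
    refine ⟨Fin.cons s p, rfl, fun i => ?_⟩
    cases i using Fin.cases with
    | zero => exact h0
    | succ i => simpa [← Fin.succ_castSucc] using hstep i

def mapEquiv {Q' : Type*} (M : LVDFA Q A l) (e : Q ≃ Q') : LVDFA Q' A l where
  next q a := e (M.next (e.symm q) a)
  start := e M.start
  final := M.final ∘ e.symm

theorem lvdfaLang_mapEquiv {Q' : Type*} (M : LVDFA Q A l) (e : Q ≃ Q') :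
    lvdfaLang (M.mapEquiv e) = lvdfaLang M := by
  funext w
  simp only [lvdfaLang, mapEquiv, Function.comp_apply]
  rw [List.foldl_hom e (g₁ := M.next) (fun q a => by simp), Equiv.symm_apply_apply]

variable [OrthomodularCompleteLattice l]

def toLVFA [DecidableEq Q] (M : LVDFA Q A l) : LVFA Q A l where
  δ q a q' := if q' = M.next q a then ⊤ else ⊥
  init q := if q = M.start then ⊤ else ⊥
  final := M.final

theorem lvfaLang_toLVFA [DecidableEq Q] (M : LVDFA Q A l) (w : List A) :
    lvfaLang M.toLVFA w = lvdfaLang M w := by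
  apply le_antisymm
  · refine iSup_le fun p => ?_
    by_cases hp : M.IsRun M.start w p
    · rw [lvdfaLang, ← hp.last_eq_foldl]
      exact inf_le_right
    · rw [IsRun, not_and_or, not_forall] at hp
      refine le_trans ?_ bot_le
      rcases hp with hinit | ⟨i, hi⟩
      · calc _ ≤ M.toLVFA.init (p 0) := inf_le_left.trans inf_le_left
          _ = ⊥ := if_neg hinit
      · calc _ ≤ M.toLVFA.δ (p i.castSucc) (w.get i) (p i.succ) :=
              inf_le_left.trans (inf_le_right.trans (iInf_le _ i))
          _ = ⊥ := if_neg hi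
  · obtain ⟨p, hp⟩ := M.exists_isRun M.start w
    refine le_iSup_of_le p ?_
    simp [toLVFA, lvdfaLang, hp.1, hp.2, hp.last_eq_foldl]

theorem isLRegular_lvdfaLang [Finite Q] (M : LVDFA Q A l) : IsLRegular (lvdfaLang M) := by
  obtain ⟨n, ⟨e⟩⟩ := Finite.exists_equiv_fin Q
  refine ⟨Fin n, inferInstance, (M.mapEquiv e).toLVFA, fun w => ?_⟩
  rw [lvfaLang_toLVFA, lvdfaLang_mapEquiv]

end LVDFA

namespace LVFA

variable {Q A l : Type*}

abbrev Trace (Q A : Type*) : Type _ := Q × Finset (Q × A × Q) × Q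

def traceValue [OrthomodularCompleteLattice l] (M : LVFA Q A l) (t : Trace Q A) : l :=
  M.init t.1 ⊓ t.2.1.inf (fun e => M.δ e.1 e.2.1 e.2.2) ⊓ M.final t.2.2

variable [DecidableEq Q] [DecidableEq A]

def pathEdges (w : List A) (p : Fin (w.length + 1) → Q) : Finset (Q × A × Q) :=
  Finset.univ.image fun i => (p i.castSucc, w.get i, p i.succ)

theorem pathEdges_nil (p : Fin 1 → Q) : pathEdges ([] : List A) p = ∅ := rfl

theorem pathEdges_cons (a : A) (w : List A) (p : Fin (w.length + 2) → Q) :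
    pathEdges (a :: w) p = insert (p 0, a, p 1) (pathEdges w (Fin.tail p)) := by
  ext e
  simp [pathEdges, Fin.exists_fin_succ, Fin.tail, eq_comm]

def extendTraces (T : Set (Trace Q A)) (w : List A) : Set (Trace Q A) :=
  {t | ∃ q₀ E, ∃ p : Fin (w.length + 1) → Q,
    (q₀, E, p 0) ∈ T ∧ t = (q₀, E ∪ pathEdges w p, p (Fin.last w.length))}

def stepTraces (T : Set (Trace Q A)) (a : A) : Set (Trace Q A) :=
  {t | ∃ q₀ E q q', (q₀, E, q) ∈ T ∧ t = (q₀, insert (q, a, q') E, q')}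

theorem extendTraces_nil (T : Set (Trace Q A)) : extendTraces T [] = T := by
  ext t
  constructor
  · rintro ⟨q₀, E, p, hT, rfl⟩
    simpa [pathEdges_nil] using hT
  · exact fun hT => ⟨t.1, t.2.1, fun _ => t.2.2, hT, by simp [pathEdges_nil]⟩

theorem extendTraces_cons (T : Set (Trace Q A)) (a : A) (w : List A) :
    extendTraces T (a :: w) = extendTraces (stepTraces T a) w := by
  ext t
  constructor
  · rintro ⟨q₀, E, p, hT, rfl⟩
    refine ⟨q₀, insert (p 0, a, p 1) E, Fin.tail p, ⟨q₀, E, p 0, p 1, hT, rfl⟩, ?_⟩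
    simp [pathEdges_cons, Fin.tail]
  · rintro ⟨_, _, p, ⟨q₀, E, q, q', hT, he⟩, rfl⟩
    simp only [Prod.mk.injEq] at he
    obtain ⟨rfl, rfl, hq'⟩ := he
    refine ⟨_, E, Fin.cons q p, hT, ?_⟩
    simp [pathEdges_cons, hq', ← Fin.succ_last]


theorem foldl_stepTraces (T : Set (Trace Q A)) (w : List A) :
    w.foldl stepTraces T = extendTraces T w := by
  induction w generalizing T with
  | nil => exact (extendTraces_nil T).symm
  | cons a w ih => rw [List.foldl_cons, ih, extendTraces_cons]

def pathTrace (w : List A) (p : Fin (w.length + 1) → Q) : Trace Q A :=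
  (p 0, pathEdges w p, p (Fin.last w.length))

def initialTraces : Set (Trace Q A) := Set.range fun q => (q, ∅, q)

theorem extendTraces_initialTraces (w : List A) :
    extendTraces initialTraces w = Set.range (pathTrace (Q := Q) w) := by
  ext t
  constructor
  · rintro ⟨q₀, E, p, ⟨q, hq⟩, rfl⟩
    simp only [Prod.mk.injEq] at hq
    obtain ⟨rfl, rfl, hp⟩ := hq
    exact ⟨p, by simp [pathTrace, hp]⟩
  · rintro ⟨p, rfl⟩
    exact ⟨p 0, ∅, p, ⟨p 0, rfl⟩, by simp [pathTrace]⟩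

variable [OrthomodularCompleteLattice l]

theorem lvfaLang_eq_iSup_traceValue (M : LVFA Q A l) (w : List A) :
    lvfaLang M w = ⨆ t ∈ Set.range (pathTrace w), M.traceValue t := by
  rw [iSup_range]
  simp [lvfaLang, traceValue, pathTrace, pathEdges, Finset.inf_image, Finset.inf_univ_eq_iInf, Function.comp_def]

def traceDFA {β : Type*} (M : LVFA Q A l) (g : l → β) : LVDFA (Set (Trace Q A)) A β where
  next := stepTraces
  start := initialTraces
  final T := g (⨆ t ∈ T, M.traceValue t)

theorem lvdfaLang_traceDFA {β : Type*} (M : LVFA Q A l) (g : l → β) (w : List A) :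
    lvdfaLang (M.traceDFA g) w = g (lvfaLang M w) := by
  rw [lvfaLang_eq_iSup_traceValue, ← extendTraces_initialTraces, ← foldl_stepTraces]
  rfl

end LVFA

theorem IsLRegular.comp {A l l' : Type*} [OrthomodularCompleteLattice l]
    [OrthomodularCompleteLattice l'] [Finite A] {f : List A → l} (hf : IsLRegular f)
    (g : l → l') : IsLRegular (g ∘ f) := by
  classical
  obtain ⟨Q, _, M, hM⟩ := hf
  have hlang : lvdfaLang (M.traceDFA g) = g ∘ f := by
    funext w
    rw [LVFA.lvdfaLang_traceDFA, Function.comp_apply, hM]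
  exact hlang ▸ (M.traceDFA g).isLRegular_lvdfaLang

/-- `l`-regular languages are closed under (ortho)complement. -/
theorem lregular_compl {l A : Type*} [OrthomodularCompleteLattice l] [Fintype A]
    (f : List A → l) (hf : IsLRegular f) :
    IsLRegular (fun w => (f w)ᶜ) :=
  hf.comp compl
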